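/- (Bogolyubov inequality.) Let n ∈ ℕ, T > 0, and let H₁, H₂ : ℝⁿ → ℝ be measurable functions such that Q_i := ∫_{ℝⁿ} e^{−H_i(Λ)/T} dΛ < ∞ for i = 1,2, and such that H₁ − H₂ is integrable with respect to each Gibbs measure Q_i^{-1} e^{−H_i/T} dΛ. Denote ⟨F⟩_i = Q_i^{-1} ∫ F(Λ) e^{−H_i(Λ)/T} dΛ. Then ⟨H₁ − H₂⟩₁ ≤ T·log Q₂ − T·log Q₁ ≤ ⟨H₁ − H₂⟩₂. -/

import Mathlib

open MeasureTheory

/-! Put `Q_f = ∫ e^f` and `m = Q_f⁻¹ ∫ (g - f) e^f`. Integrating `e^f (1 + y) ≤ e^f e^y` with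
`y = g - f - m` gives `Q_f ≤ e^{-m} Q_g`, that is `m ≤ log Q_g - log Q_f`. With `f = -H₁/T`,
`g = -H₂/T` this is the left inequality; exchanging `H₁` and `H₂` gives the right one. -/

theorem inv_integral_exp_mul_integral_le_log_sub_log {α : Type*} [MeasurableSpace α]
    {μ : Measure α} [NeZero μ] {f g : α → ℝ}
    (hf : Integrable (fun x => Real.exp (f x)) μ) (hg : Integrable (fun x => Real.exp (g x)) μ)
    (hgf : Integrable (fun x => (g x - f x) * Real.exp (f x)) μ) :
    (∫ x, Real.exp (f x) ∂μ)⁻¹ * ∫ x, (g x - f x) * Real.exp (f x) ∂μ ≤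
      Real.log (∫ x, Real.exp (g x) ∂μ) - Real.log (∫ x, Real.exp (f x) ∂μ) := by
  set Qf := ∫ x, Real.exp (f x) ∂μ
  set m := Qf⁻¹ * ∫ x, (g x - f x) * Real.exp (f x) ∂μ
  have hQf : 0 < Qf := integral_exp_pos hf
  have hpointwise : ∀ x, Real.exp (f x) + (g x - f x) * Real.exp (f x) - m * Real.exp (f x) ≤
      Real.exp (-m) * Real.exp (g x) := fun x => by
    calc _ = Real.exp (f x) * ((g x - f x - m) + 1) := by ring
      _ ≤ Real.exp (f x) * Real.exp (g x - f x - m) :=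
        mul_le_mul_of_nonneg_left (Real.add_one_le_exp _) (Real.exp_pos _).le
      _ = Real.exp (-m) * Real.exp (g x) := by rw [← Real.exp_add, ← Real.exp_add]; ring_nf
  have hQf_le : Qf ≤ Real.exp (-m) * ∫ x, Real.exp (g x) ∂μ := by
    have hadd : Integrable (fun x => Real.exp (f x) + (g x - f x) * Real.exp (f x)) μ :=
      hf.add hgf
    have hint : Integrable
        (fun x => Real.exp (f x) + (g x - f x) * Real.exp (f x) - m * Real.exp (f x)) μ :=
      hadd.sub (hf.const_mul m)
    have h := integral_mono hint (hg.const_mul _) hpointwise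
    rw [integral_sub hadd (hf.const_mul m), integral_add hf hgf, integral_const_mul,
      integral_const_mul] at h
    have hmQf : m * Qf = ∫ x, (g x - f x) * Real.exp (f x) ∂μ := by
      simp only [m]; field_simp
    linarith
  have hlog := Real.log_le_log hQf hQf_le
  rw [Real.log_mul (Real.exp_pos _).ne' (integral_exp_pos hg).ne', Real.log_exp] at hlog
  linarith

theorem inv_integral_exp_neg_div_mul_integral_le_mul_log_sub {α : Type*} [MeasurableSpace α]
    {μ : Measure α} [NeZero μ] {T : ℝ} (hT : 0 < T) {H K : α → ℝ}
    (hH : Integrable (fun x => Real.exp (-H x / T)) μ)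
    (hK : Integrable (fun x => Real.exp (-K x / T)) μ)
    (hHK : Integrable (fun x => (H x - K x) * Real.exp (-H x / T)) μ) :
    (∫ x, Real.exp (-H x / T) ∂μ)⁻¹ * ∫ x, (H x - K x) * Real.exp (-H x / T) ∂μ ≤
      T * Real.log (∫ x, Real.exp (-K x / T) ∂μ) - T * Real.log (∫ x, Real.exp (-H x / T) ∂μ) := by
  have hscale : (fun x => (-K x / T - -H x / T) * Real.exp (-H x / T)) =
      fun x => T⁻¹ * ((H x - K x) * Real.exp (-H x / T)) := by
    funext x; ring
  have h := inv_integral_exp_mul_integral_le_log_sub_log hH hK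
    (by rw [hscale]; exact hHK.const_mul T⁻¹)
  rw [hscale, integral_const_mul, mul_left_comm] at h
  have := mul_le_mul_of_nonneg_left h hT.le
  rwa [mul_inv_cancel_left₀ hT.ne', mul_sub] at this

theorem stmt5_general (n : ℕ) (T : ℝ) (hT : 0 < T) (H₁ H₂ : (Fin n → ℝ) → ℝ)
    (hQ₁ : Integrable (fun Λ : Fin n → ℝ => Real.exp (-H₁ Λ / T)))
    (hQ₂ : Integrable (fun Λ : Fin n → ℝ => Real.exp (-H₂ Λ / T)))
    (hI₁ : Integrable (fun Λ : Fin n → ℝ => (H₁ Λ - H₂ Λ) * Real.exp (-H₁ Λ / T)))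
    (hI₂ : Integrable (fun Λ : Fin n → ℝ => (H₁ Λ - H₂ Λ) * Real.exp (-H₂ Λ / T))) :
    (∫ Λ : Fin n → ℝ, Real.exp (-H₁ Λ / T))⁻¹ *
        (∫ Λ : Fin n → ℝ, (H₁ Λ - H₂ Λ) * Real.exp (-H₁ Λ / T)) ≤
      T * Real.log (∫ Λ : Fin n → ℝ, Real.exp (-H₂ Λ / T)) -
        T * Real.log (∫ Λ : Fin n → ℝ, Real.exp (-H₁ Λ / T)) ∧
    T * Real.log (∫ Λ : Fin n → ℝ, Real.exp (-H₂ Λ / T)) -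
        T * Real.log (∫ Λ : Fin n → ℝ, Real.exp (-H₁ Λ / T)) ≤
      (∫ Λ : Fin n → ℝ, Real.exp (-H₂ Λ / T))⁻¹ *
        (∫ Λ : Fin n → ℝ, (H₁ Λ - H₂ Λ) * Real.exp (-H₂ Λ / T)) := by
  refine ⟨inv_integral_exp_neg_div_mul_integral_le_mul_log_sub hT hQ₁ hQ₂ hI₁, ?_⟩
  have hswap : (fun Λ : Fin n → ℝ => (H₂ Λ - H₁ Λ) * Real.exp (-H₂ Λ / T)) =
      fun Λ => -((H₁ Λ - H₂ Λ) * Real.exp (-H₂ Λ / T)) := by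
    funext Λ; ring
  have h := inv_integral_exp_neg_div_mul_integral_le_mul_log_sub hT hQ₂ hQ₁
    (by rw [hswap]; exact hI₂.neg)
  rw [hswap, integral_neg, mul_neg] at h
  linarith

/-- Bogolyubov's inequality. If `Q_i = ∫ e^{-H_i/T} dΛ < ∞` and
`⟨F⟩_i = Q_i⁻¹ ∫ F e^{-H_i/T} dΛ`, then
`⟨H₁ - H₂⟩₁ ≤ T log Q₂ - T log Q₁ ≤ ⟨H₁ - H₂⟩₂`. -/
theorem stmt5 (n : ℕ) (T : ℝ) (hT : 0 < T) (H₁ H₂ : (Fin n → ℝ) → ℝ)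
    (hm₁ : Measurable H₁) (hm₂ : Measurable H₂)
    (hQ₁ : Integrable (fun Λ : Fin n → ℝ => Real.exp (-H₁ Λ / T)))
    (hQ₂ : Integrable (fun Λ : Fin n → ℝ => Real.exp (-H₂ Λ / T)))
    (hI₁ : Integrable (fun Λ : Fin n → ℝ => (H₁ Λ - H₂ Λ) * Real.exp (-H₁ Λ / T)))
    (hI₂ : Integrable (fun Λ : Fin n → ℝ => (H₁ Λ - H₂ Λ) * Real.exp (-H₂ Λ / T))) :
    (∫ Λ : Fin n → ℝ, Real.exp (-H₁ Λ / T))⁻¹ *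
        (∫ Λ : Fin n → ℝ, (H₁ Λ - H₂ Λ) * Real.exp (-H₁ Λ / T)) ≤
      T * Real.log (∫ Λ : Fin n → ℝ, Real.exp (-H₂ Λ / T)) -
        T * Real.log (∫ Λ : Fin n → ℝ, Real.exp (-H₁ Λ / T)) ∧
    T * Real.log (∫ Λ : Fin n → ℝ, Real.exp (-H₂ Λ / T)) -
        T * Real.log (∫ Λ : Fin n → ℝ, Real.exp (-H₁ Λ / T)) ≤
      (∫ Λ : Fin n → ℝ, Real.exp (-H₂ Λ / T))⁻¹ *
        (∫ Λ : Fin n → ℝ, (H₁ Λ - H₂ Λ) * Real.exp (-H₂ Λ / T)) :=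
  stmt5_general n T hT H₁ H₂ hQ₁ hQ₂ hI₁ hI₂
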